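/- Let C be a model category such that the canonical model structure on sC exists. Then a map between fibrant objects of sC is a weak equivalence in the canonical model structure if and only if it is a level weak equivalence. -/

import Mathlib

open CategoryTheory Limits Simplicial Opposite

universe v u

/-- A retract of a morphism `g` in the arrow category. -/
def IsRetractOf {C : Type u} [Category.{v} C] {X Y Z W : C}
    (f : X ⟶ Y) (g : Z ⟶ W) : Prop :=
  ∃ (i : X ⟶ Z) (r : Z ⟶ X) (j : Y ⟶ W) (s : W ⟶ Y),
    i ≫ r = 𝟙 X ∧ j ≫ s = 𝟙 Y ∧ i ≫ g = f ≫ j ∧ g ≫ s = r ≫ f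

/-- A (Quillen) model structure on a category `C`: three classes of morphisms,
weak equivalences, cofibrations and fibrations, satisfying the two-out-of-three
axiom, closure under retracts, the lifting axioms and the factorization axioms. -/
structure ModelStructure (C : Type u) [Category.{v} C] where
  W : MorphismProperty C
  Cof : MorphismProperty C
  Fib : MorphismProperty C
  w_of_isos : ∀ {X Y : C} (f : X ⟶ Y), IsIso f → W f
  w_comp : ∀ {X Y Z : C} (f : X ⟶ Y) (g : Y ⟶ Z), W f → W g → W (f ≫ g)
  w_cancel_left : ∀ {X Y Z : C} (f : X ⟶ Y) (g : Y ⟶ Z), W f → W (f ≫ g) → W g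
  w_cancel_right : ∀ {X Y Z : C} (f : X ⟶ Y) (g : Y ⟶ Z), W g → W (f ≫ g) → W f
  w_retract : ∀ {X Y Z W' : C} (f : X ⟶ Y) (g : Z ⟶ W'), IsRetractOf f g → W g → W f
  cof_retract : ∀ {X Y Z W' : C} (f : X ⟶ Y) (g : Z ⟶ W'), IsRetractOf f g → Cof g → Cof f
  fib_retract : ∀ {X Y Z W' : C} (f : X ⟶ Y) (g : Z ⟶ W'), IsRetractOf f g → Fib g → Fib f
  lift_triv_cof : ∀ {A B X Y : C} (i : A ⟶ B) (p : X ⟶ Y),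
    Cof i → W i → Fib p → HasLiftingProperty i p
  lift_triv_fib : ∀ {A B X Y : C} (i : A ⟶ B) (p : X ⟶ Y),
    Cof i → Fib p → W p → HasLiftingProperty i p
  fact_cof_trivFib : ∀ {X Y : C} (f : X ⟶ Y),
    ∃ (Z : C) (i : X ⟶ Z) (p : Z ⟶ Y), Cof i ∧ Fib p ∧ W p ∧ i ≫ p = f
  fact_trivCof_fib : ∀ {X Y : C} (f : X ⟶ Y),
    ∃ (Z : C) (i : X ⟶ Z) (p : Z ⟶ Y), Cof i ∧ W i ∧ Fib p ∧ i ≫ p = f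

namespace ModelStructure

variable {C : Type u} [Category.{v} C] (M : ModelStructure C)

/-- An object is cofibrant if the map from the initial object is a cofibration. -/
def Cofibrant [HasInitial C] (A : C) : Prop := M.Cof (initial.to A)

/-- An object is fibrant if the map to the terminal object is a fibration. -/
def Fibrant [HasTerminal C] (X : C) : Prop := M.Fib (terminal.from X)

/-- Left properness: the pushout of a weak equivalence along a cofibration is a
weak equivalence. -/
def LeftProper : Prop :=
  ∀ ⦃Z X Y P : C⦄ (f : Z ⟶ X) (g : Z ⟶ Y) (h : X ⟶ P) (k : Y ⟶ P),
    IsPushout f g h k → M.W f → M.Cof g → M.W k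

/-- Right properness: the pullback of a weak equivalence along a fibration is a
weak equivalence. -/
def RightProper : Prop :=
  ∀ ⦃P X Y Z : C⦄ (h : P ⟶ X) (k : P ⟶ Y) (f : X ⟶ Z) (g : Y ⟶ Z),
    IsPullback h k f g → M.W f → M.Fib g → M.W h

end ModelStructure
section Core1
open CategoryTheory Limits Simplicial Opposite

variable (C : Type u) [Category.{v} C]

/-- The constant simplicial object functor `c : C ⥤ sC`. -/
abbrev constSimp : C ⥤ SimplicialObject C := Functor.const _

/-- Evaluation at simplicial degree zero, `Ev : sC ⥤ C`. -/
abbrev ev0 : SimplicialObject C ⥤ C := (evaluation _ _).obj (op (⦋0⦌ : SimplexCategory))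

variable {C}

/-- The class of level weak equivalences in `sC` relative to a model structure on `C`. -/
def levelWE (M : ModelStructure C) : MorphismProperty (SimplicialObject C) :=
  fun _ _ f => ∀ Δ : SimplexCategoryᵒᵖ, M.W (f.app Δ)

/-- An object of `sC` is homotopically constant if all its simplicial face and
degeneracy operators are weak equivalences in `C`. -/
def HomotopicallyConstant (M : ModelStructure C) (X : SimplicialObject C) : Prop :=
  (∀ (n : ℕ) (i : Fin (n + 2)), M.W (X.δ i)) ∧ ∀ (n : ℕ) (i : Fin (n + 1)), M.W (X.σ i)

end Core1

section Matching
open CategoryTheory Limits Simplicial Opposite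

variable {C : Type u} [Category.{v} C] [HasLimitsOfSize.{0,0} C] [HasColimitsOfSize.{0,0} C]

/-- The matching category of `[n]`: surjections `[n] → [j]` in `Δᵒᵖ` (i.e. maps
`op [n] ⟶ op [j]` that are epimorphisms in `Δᵒᵖ`) with `j < n`. -/
def MatchingCat (n : ℕ) : Type :=
  ObjectProperty.FullSubcategory (fun u : Under (op (⦋n⦌ : SimplexCategory)) =>
    u.right.unop.len < n ∧ Epi u.hom)

instance (n : ℕ) : Category (MatchingCat n) := by
  dsimp [MatchingCat]; infer_instance

/-- The diagram over the matching category associated to a simplicial object. -/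
def matchingDiagram (n : ℕ) (X : SimplicialObject C) : MatchingCat n ⥤ C :=
  ObjectProperty.ι _ ⋙ Under.forget _ ⋙ X

/-- The `n`-th matching object `M_n X` of a simplicial object `X`. -/
noncomputable def matchingObject (n : ℕ) (X : SimplicialObject C) : C :=
  limit (matchingDiagram n X)

/-- The canonical map `X_n ⟶ M_n X`. -/
noncomputable def matchingMap (n : ℕ) (X : SimplicialObject C) :
    X.obj (op ⦋n⦌) ⟶ matchingObject n X :=
  limit.lift (matchingDiagram n X)
    { pt := X.obj (op ⦋n⦌)
      π :=
        { app := fun u => X.map u.obj.hom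
          naturality := fun u v m => by
            show 𝟙 _ ≫ X.map v.obj.hom = X.map u.obj.hom ≫ X.map m.hom.right
            rw [Category.id_comp, ← X.map_comp]
            exact congrArg X.map (Under.w m.hom).symm } }

/-- The map `M_n X ⟶ M_n Y` induced by a map `f : X ⟶ Y` in `sC`. -/
noncomputable def matchingObjMap (n : ℕ) {X Y : SimplicialObject C} (f : X ⟶ Y) :
    matchingObject n X ⟶ matchingObject n Y :=
  limMap (Functor.whiskerLeft (ObjectProperty.ι _ ⋙ Under.forget _) f)

lemma matching_comm (n : ℕ) {X Y : SimplicialObject C} (f : X ⟶ Y) :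
    f.app (op ⦋n⦌) ≫ matchingMap n Y = matchingMap n X ≫ matchingObjMap n f := by
  apply limit.hom_ext
  intro u
  simp only [matchingMap, matchingObjMap]
  erw [Category.assoc, Category.assoc, limit.lift_π, limMap_π, limit.lift_π_assoc]
  exact (f.naturality _).symm

/-- The relative matching map `X_n ⟶ Y_n ×_{M_n Y} M_n X` of a map `f : X ⟶ Y`. -/
noncomputable def relMatchingMap (n : ℕ) {X Y : SimplicialObject C} (f : X ⟶ Y) :
    X.obj (op ⦋n⦌) ⟶ pullback (matchingMap n Y) (matchingObjMap n f) :=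
  pullback.lift (f.app (op ⦋n⦌)) (matchingMap n X) (matching_comm n f)

/-- A map in `sC` is a Reedy fibration if all its relative matching maps are
fibrations in `C`. -/
def ReedyFibration (M : ModelStructure C) {X Y : SimplicialObject C} (f : X ⟶ Y) : Prop :=
  ∀ n : ℕ, M.Fib (relMatchingMap n f)

/-- An object `X` of `sC` is Reedy fibrant if all its matching maps `X_n ⟶ M_n X`
are fibrations in `C`. -/
def ReedyFibrantObj (M : ModelStructure C) (X : SimplicialObject C) : Prop :=
  ∀ n : ℕ, M.Fib (matchingMap n X)

end Matching

section Latching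
open CategoryTheory Limits Simplicial Opposite

variable {C : Type u} [Category.{v} C] [HasLimitsOfSize.{0,0} C] [HasColimitsOfSize.{0,0} C]

/-- The latching category of `[n]`: injections `[j] → [n]` in `Δᵒᵖ` (i.e. maps
`op [j] ⟶ op [n]` that are monomorphisms in `Δᵒᵖ`) with `j < n`. -/
def LatchingCat (n : ℕ) : Type :=
  ObjectProperty.FullSubcategory (fun u : Over (op (⦋n⦌ : SimplexCategory)) =>
    u.left.unop.len < n ∧ Mono u.hom)

instance (n : ℕ) : Category (LatchingCat n) := by
  dsimp [LatchingCat]; infer_instance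

/-- The diagram over the latching category associated to a simplicial object. -/
def latchingDiagram (n : ℕ) (X : SimplicialObject C) : LatchingCat n ⥤ C :=
  ObjectProperty.ι _ ⋙ Over.forget _ ⋙ X

/-- The `n`-th latching object `L_n X` of a simplicial object `X`. -/
noncomputable def latchingObject (n : ℕ) (X : SimplicialObject C) : C :=
  colimit (latchingDiagram n X)

/-- The canonical map `L_n X ⟶ X_n`. -/
noncomputable def latchingMap (n : ℕ) (X : SimplicialObject C) :
    latchingObject n X ⟶ X.obj (op ⦋n⦌) :=
  colimit.desc (latchingDiagram n X)
    { pt := X.obj (op ⦋n⦌)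
      ι :=
        { app := fun u => X.map u.obj.hom
          naturality := fun u v m => by
            show X.map m.hom.left ≫ X.map v.obj.hom = X.map u.obj.hom ≫ 𝟙 _
            rw [Category.comp_id, ← X.map_comp]
            exact congrArg X.map (Over.w m.hom) } }

/-- The map `L_n X ⟶ L_n Y` induced by a map `f : X ⟶ Y` in `sC`. -/
noncomputable def latchingObjMap (n : ℕ) {X Y : SimplicialObject C} (f : X ⟶ Y) :
    latchingObject n X ⟶ latchingObject n Y :=
  colimMap (Functor.whiskerLeft (ObjectProperty.ι _ ⋙ Over.forget _) f)

lemma latching_comm (n : ℕ) {X Y : SimplicialObject C} (f : X ⟶ Y) :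
    latchingObjMap n f ≫ latchingMap n Y = latchingMap n X ≫ f.app (op ⦋n⦌) := by
  apply colimit.hom_ext
  intro u
  simp only [latchingMap, latchingObjMap]
  erw [ι_colimMap_assoc, colimit.ι_desc, colimit.ι_desc_assoc]
  exact (f.naturality u.obj.hom).symm

/-- The relative latching map `X_n ⊔_{L_n X} L_n Y ⟶ Y_n` of a map `f : X ⟶ Y`. -/
noncomputable def relLatchingMap (n : ℕ) {X Y : SimplicialObject C} (f : X ⟶ Y) :
    pushout (latchingMap n X) (latchingObjMap n f) ⟶ Y.obj (op ⦋n⦌) :=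
  pushout.desc (f.app (op ⦋n⦌)) (latchingMap n Y) (latching_comm n f).symm

/-- A map in `sC` is a Reedy cofibration if all its relative latching maps are
cofibrations in `C`. -/
def ReedyCofibration (M : ModelStructure C) {X Y : SimplicialObject C} (f : X ⟶ Y) : Prop :=
  ∀ n : ℕ, M.Cof (relLatchingMap n f)

end Latching
section Instances
open CategoryTheory Limits

instance simplicialObjectHasLimits {C : Type u} [Category.{v} C]
    [HasLimitsOfSize.{0,0} C] : HasLimitsOfSize.{0,0} (SimplicialObject C) := by
  dsimp [SimplicialObject]; infer_instance

instance simplicialObjectHasColimits {C : Type u} [Category.{v} C]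
    [HasColimitsOfSize.{0,0} C] : HasColimitsOfSize.{0,0} (SimplicialObject C) := by
  dsimp [SimplicialObject]; infer_instance

end Instances
section Equifibered
open CategoryTheory Limits Simplicial Opposite

variable {C : Type u} [Category.{v} C] [HasLimitsOfSize.{0,0} C] [HasColimitsOfSize.{0,0} C]

/-- The map `X_{m+1} ⟶ X_m ×_{Y_m} Y_{m+1}` induced by the face operator `d_i`
and a map `f : X ⟶ Y` in `sC`. -/
noncomputable def equifiberedMap {X Y : SimplicialObject C} (f : X ⟶ Y)
    (m : ℕ) (i : Fin (m + 2)) :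
    X.obj (op ⦋m + 1⦌) ⟶ pullback (f.app (op ⦋m⦌)) (Y.δ i) :=
  pullback.lift (X.δ i) (f.app (op ⦋m + 1⦌)) (f.naturality (SimplexCategory.δ i).op)

/-- A Reedy fibration `f : X ⟶ Y` is equifibered if all the maps
`X_{m+1} ⟶ X_m ×_{Y_m} Y_{m+1}` induced by face operators are weak equivalences. -/
def EquifiberedReedyFibration (M : ModelStructure C) {X Y : SimplicialObject C}
    (f : X ⟶ Y) : Prop :=
  ReedyFibration M f ∧ ∀ (m : ℕ) (i : Fin (m + 2)), M.W (equifiberedMap f m i)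

end Equifibered

section Realization
open CategoryTheory Limits Simplicial Opposite

variable {C : Type u} [Category.{v} C]

/-- The hom-sets `[A, B]^{HR}` in the homotopy category of the Reedy model
structure on `sC`, realized as the localization of `sC` at the level weak
equivalences. -/
noncomputable abbrev reedyHo (M : ModelStructure C) :
    SimplicialObject C ⥤ (levelWE M).Localization :=
  (levelWE M).Q

/-- A map `f` in `sC` is a realization weak equivalence if for every `Z` in `C`
it induces a bijection `[B, cZ]^{HR} → [A, cZ]^{HR}` on homotopy classes of maps
into constant objects in the Reedy homotopy category. -/
def RealizationWE (M : ModelStructure C) {A B : SimplicialObject C} (f : A ⟶ B) : Prop :=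
  ∀ Z : C, Function.Bijective
    (fun g : (reedyHo M).obj B ⟶ (reedyHo M).obj ((constSimp C).obj Z) =>
      (reedyHo M).map f ≫ g)

variable [HasLimitsOfSize.{0,0} C] [HasColimitsOfSize.{0,0} C]

/-- The Realization Axiom: every equifibered Reedy fibration which is a
realization weak equivalence is a level weak equivalence. -/
def RealizationAxiom (M : ModelStructure C) : Prop :=
  ∀ ⦃X Y : SimplicialObject C⦄ (f : X ⟶ Y),
    EquifiberedReedyFibration M f → RealizationWE M f → levelWE M f

end Realization

section Canonical
open CategoryTheory Limits Simplicial Opposite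

variable {C : Type u} [Category.{v} C] [HasLimitsOfSize.{0,0} C] [HasColimitsOfSize.{0,0} C]

/-- A model structure `N` on `sC` is the canonical one (relative to a model
structure `M` on `C`) if every level weak equivalence is a weak equivalence, the
cofibrations are exactly the Reedy cofibrations, and the fibrant objects are
exactly the homotopically constant Reedy fibrant objects. -/
def IsCanonical [HasTerminal (SimplicialObject C)] (M : ModelStructure C)
    (N : ModelStructure (SimplicialObject C)) : Prop :=
  (∀ ⦃X Y : SimplicialObject C⦄ (f : X ⟶ Y), levelWE M f → N.W f) ∧
  (∀ ⦃X Y : SimplicialObject C⦄ (f : X ⟶ Y), N.Cof f ↔ ReedyCofibration M f) ∧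
  (∀ X : SimplicialObject C, N.Fibrant X ↔
    (HomotopicallyConstant M X ∧ ReedyFibrantObj M X))

end Canonical

/-!
By Ken Brown's lemma, a weak equivalence between fibrant objects is sent into `W` by any functor
that sends trivial fibrations into `W`. Evaluation at `[0]` is such a functor from the canonical
structure to `C`: it is right adjoint to the constant functor `c`, and `c` sends cofibrations to
Reedy cofibrations (the latching maps of a constant object are isomorphisms in positive degrees),
so the degree-zero part of a trivial fibration lifts against every cofibration of `C` and is
therefore a weak equivalence. Finally, a map between homotopically constant objects that is a weak
equivalence in degree `0` is one in every degree, by two-out-of-three along the degeneracies.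
-/

lemma isRetractOf_of_retractArrow {D : Type u} [Category.{v} D] {X Y Z W : D}
    {f : X ⟶ Y} {g : Z ⟶ W} (h : RetractArrow f g) : IsRetractOf f g :=
  ⟨h.i.left, h.r.left, h.i.right, h.r.right, h.left.retract, h.right.retract,
    h.i.w, h.r.w.symm⟩

namespace ModelStructure

variable {D : Type u} [Category.{v} D] (M : ModelStructure D)

lemma w_id (X : D) : M.W (𝟙 X) :=
  M.w_of_isos _ inferInstance

lemma cof_of_isIso {A B : D} (f : A ⟶ B) [IsIso f] : M.Cof f := by
  obtain ⟨Z, i, q, hi, -, -, hfac⟩ := M.fact_cof_trivFib f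
  exact M.cof_retract f i (isRetractOf_of_retractArrow (.ofLeftLiftingProperty hfac)) hi

lemma cof_isIso_comp {A A' B : D} (e : A ⟶ A') [IsIso e] {i : A' ⟶ B} (hi : M.Cof i) :
    M.Cof (e ≫ i) :=
  M.cof_retract _ i ⟨e, inv e, 𝟙 _, 𝟙 _, by simp, by simp, by simp, by simp⟩ hi

lemma w_of_rlp_cof {E B : D} (p : E ⟶ B) (h : M.Cof.rlp p) : M.W p := by
  obtain ⟨Z, j, q, hj, -, hqw, hfac⟩ := M.fact_cof_trivFib p
  have := h j hj
  exact M.w_retract p q (isRetractOf_of_retractArrow (.ofRightLiftingProperty hfac)) hqw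

lemma fib_eq_rlp : M.Fib = (M.Cof ⊓ M.W).rlp := by
  ext E B p
  refine ⟨fun hp _ _ i hi => M.lift_triv_cof i p hi.1 hi.2 hp, fun hp => ?_⟩
  obtain ⟨Z, j, q, hj, hjw, hq, hfac⟩ := M.fact_trivCof_fib p
  have := hp j ⟨hj, hjw⟩
  exact M.fib_retract p q (isRetractOf_of_retractArrow (.ofRightLiftingProperty hfac)) hq

lemma fib_comp {A B E : D} {p : A ⟶ B} {q : B ⟶ E} (hp : M.Fib p) (hq : M.Fib q) :
    M.Fib (p ≫ q) := by
  rw [fib_eq_rlp] at *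
  exact MorphismProperty.comp_mem _ p q hp hq

lemma fib_of_isPullback {P X Y Z : D} {a : P ⟶ X} {b : P ⟶ Y} {f : X ⟶ Z} {g : Y ⟶ Z}
    (h : IsPullback a b f g) (hg : M.Fib g) : M.Fib a := by
  rw [fib_eq_rlp] at *
  exact MorphismProperty.of_isPullback h.flip hg

theorem w_map_of_fibrant [HasTerminal D] [HasBinaryProducts D] {E : Type*} [Category E]
    (M' : ModelStructure E) (F : D ⥤ E)
    (hF : ∀ ⦃A B : D⦄ (p : A ⟶ B), M.Fib p → M.W p → M'.W (F.map p))
    {X Y : D} {f : X ⟶ Y} (hX : M.Fibrant X) (hY : M.Fibrant Y) (hf : M.W f) :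
    M'.W (F.map f) := by
  obtain ⟨Z, j, q, -, hjw, hq, hfac⟩ := M.fact_trivCof_fib (prod.lift (𝟙 X) f)
  have hpb := IsPullback.of_hasBinaryProduct' X Y
  have hq₁ : M.Fib (q ≫ prod.fst) := M.fib_comp hq (M.fib_of_isPullback hpb hY)
  have hq₂ : M.Fib (q ≫ prod.snd) := M.fib_comp hq (M.fib_of_isPullback hpb.flip hX)
  have hjq₁ : j ≫ q ≫ prod.fst = 𝟙 X := by rw [← Category.assoc, hfac, prod.lift_fst]
  have hjq₂ : j ≫ q ≫ prod.snd = f := by rw [← Category.assoc, hfac, prod.lift_snd]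
  have hFq₁ := hF _ hq₁ (M.w_cancel_left _ _ hjw (hjq₁ ▸ M.w_id X))
  have hFq₂ := hF _ hq₂ (M.w_cancel_left _ _ hjw (hjq₂ ▸ hf))
  have hFj : M'.W (F.map j) :=
    M'.w_cancel_right _ _ hFq₁ (by rw [← F.map_comp, hjq₁, F.map_id]; exact M'.w_id _)
  rw [← hjq₂, F.map_comp]
  exact M'.w_comp _ _ hFj hFq₂

end ModelStructure

section Simplicial

variable {C : Type u} [Category.{v} C]

noncomputable def constSimpAdjEv0 : constSimp C ⊣ ev0 C :=
  constantPresheafAdj C SimplexCategory.isTerminalZero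

lemma levelWE_of_app_zero (M : ModelStructure C) {X Y : SimplicialObject C} {f : X ⟶ Y}
    (hX : ∀ (n : ℕ) (i : Fin (n + 1)), M.W (X.σ i))
    (hY : ∀ (n : ℕ) (i : Fin (n + 1)), M.W (Y.σ i))
    (h0 : M.W (f.app (op ⦋0⦌))) : levelWE M f := by
  have hn : ∀ n : ℕ, M.W (f.app (op ⦋n⦌)) := by
    intro n
    induction n with
    | zero => exact h0
    | succ n ih =>
      have hnat : X.σ 0 ≫ f.app (op ⦋n + 1⦌) = f.app (op ⦋n⦌) ≫ Y.σ 0 :=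
        f.naturality (SimplexCategory.σ 0).op
      exact M.w_cancel_left _ _ (hX n 0) (hnat ▸ M.w_comp _ _ ih (hY n 0))
  rintro ⟨⟨n⟩⟩
  exact hn n

variable [HasColimitsOfSize.{0,0} C]

instance : IsEmpty (LatchingCat 0) :=
  ⟨fun u => Nat.not_lt_zero _ u.property.1⟩

noncomputable def isInitialLatchingObjectZero (X : SimplicialObject C) :
    IsInitial (latchingObject 0 X) :=
  isColimitEquivIsInitialOfIsEmpty C (colimit.cocone _) (colimit.isColimit _)

lemma isIso_latchingObjMap_zero {X Y : SimplicialObject C} (f : X ⟶ Y) :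
    IsIso (latchingObjMap 0 f) :=
  isIso_of_isInitial (isInitialLatchingObjectZero X) (isInitialLatchingObjectZero Y) _

def LatchingCat.toZero (n : ℕ) (hn : 0 < n) : LatchingCat n :=
  ⟨Over.mk (SimplexCategory.const ⦋n⦌ ⦋0⦌ 0).op, by simpa using hn, by
    have : Epi (SimplexCategory.const ⦋n⦌ ⦋0⦌ 0) :=
      SimplexCategory.epi_iff_surjective.2 fun _ => ⟨0, Subsingleton.elim (α := Fin 1) _ _⟩
    exact inferInstanceAs (Mono (SimplexCategory.const ⦋n⦌ ⦋0⦌ 0).op)⟩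

def LatchingCat.isInitialToZero (n : ℕ) (hn : 0 < n) : IsInitial (LatchingCat.toZero n hn) :=
  IsInitial.ofUniqueHom
    (fun _ => ObjectProperty.homMk (Over.homMk (SimplexCategory.const _ ⦋0⦌ 0).op
      (Quiver.Hom.unop_inj (SimplexCategory.eq_const_to_zero _))))
    (fun _ _ => ObjectProperty.hom_ext _ <| Over.OverMorphism.ext <|
      Quiver.Hom.unop_inj (SimplexCategory.eq_const_to_zero _))

instance isIso_latchingMap_const (A : C) (n : ℕ) [NeZero n] :
    IsIso (latchingMap n ((constSimp C).obj A)) := by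
  have : ∀ (u u' : LatchingCat n) (m : u ⟶ u'),
      IsIso ((latchingDiagram n ((constSimp C).obj A)).map m) :=
    fun _ _ _ => inferInstanceAs (IsIso (𝟙 A))
  have := isIso_ι_of_isInitial (LatchingCat.isInitialToZero n (NeZero.pos n))
    (latchingDiagram n ((constSimp C).obj A))
  have : IsIso (colimit.ι _ (LatchingCat.toZero n (NeZero.pos n)) ≫
      latchingMap n ((constSimp C).obj A)) := by
    rw [latchingMap, colimit.ι_desc]
    exact inferInstanceAs (IsIso (𝟙 A))
  exact IsIso.of_isIso_comp_left (colimit.ι _ (LatchingCat.toZero n (NeZero.pos n))) _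

variable [HasLimitsOfSize.{0,0} C]

lemma cof_relLatchingMap_zero (M : ModelStructure C) {X Y : SimplicialObject C} (f : X ⟶ Y)
    (hf : M.Cof (f.app (op ⦋0⦌))) : M.Cof (relLatchingMap 0 f) := by
  have := isIso_latchingObjMap_zero f
  have hfac : relLatchingMap 0 f = inv (pushout.inl _ _) ≫ f.app (op ⦋0⦌) := by
    rw [IsIso.eq_inv_comp]
    exact pushout.inl_desc _ _ _
  exact hfac ▸ M.cof_isIso_comp _ hf

lemma isIso_relLatchingMap {X Y : SimplicialObject C} (n : ℕ) (f : X ⟶ Y)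
    [IsIso (latchingMap n X)] [IsIso (latchingMap n Y)] : IsIso (relLatchingMap n f) := by
  have hfac : pushout.inr _ _ ≫ relLatchingMap n f = latchingMap n Y := pushout.inr_desc _ _ _
  have : IsIso (pushout.inr _ _ ≫ relLatchingMap n f) := hfac ▸ inferInstance
  exact IsIso.of_isIso_comp_left (pushout.inr _ _) _

lemma reedyCofibration_constSimp_map (M : ModelStructure C) {A B : C} {i : A ⟶ B}
    (hi : M.Cof i) : ReedyCofibration M ((constSimp C).map i) := by
  rintro (_ | n)
  · exact cof_relLatchingMap_zero M _ hi
  · have := isIso_relLatchingMap (n + 1) ((constSimp C).map i)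
    exact M.cof_of_isIso _

lemma w_app_zero_of_fib_of_w (M : ModelStructure C) (N : ModelStructure (SimplicialObject C))
    (hcof : ∀ ⦃A B : SimplicialObject C⦄ (i : A ⟶ B), ReedyCofibration M i → N.Cof i)
    {X Y : SimplicialObject C} {p : X ⟶ Y} (hp : N.Fib p) (hpw : N.W p) :
    M.W (p.app (op ⦋0⦌)) :=
  M.w_of_rlp_cof _ fun _ _ i hi => (constSimpAdjEv0.hasLiftingProperty_iff i p).1 <|
    N.lift_triv_fib _ p (hcof _ (reedyCofibration_constSimp_map M hi)) hp hpw

end Simplicial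

open CategoryTheory Limits Simplicial Opposite in
/-- In the canonical model structure on `sC`, a map between fibrant objects is a
weak equivalence if and only if it is a level weak equivalence. -/
theorem canonical_we_between_fibrant_iff_level {C : Type u} [Category.{v} C]
    [HasLimitsOfSize.{0,0} C] [HasColimitsOfSize.{0,0} C]
    (M : ModelStructure C) (N : ModelStructure (SimplicialObject C))
    (hN : IsCanonical M N) {X Y : SimplicialObject C} (f : X ⟶ Y)
    (hX : N.Fibrant X) (hY : N.Fibrant Y) :
    N.W f ↔ levelWE M f := by
  obtain ⟨hlevel, hcof, hfibrant⟩ := hN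
  refine ⟨fun hf => ?_, hlevel f⟩
  have hf0 : M.W (f.app (op ⦋0⦌)) :=
    N.w_map_of_fibrant M (ev0 C)
      (fun _ _ _ hp hpw => w_app_zero_of_fib_of_w M N (fun _ _ i => (hcof i).2) hp hpw)
      hX hY hf
  exact levelWE_of_app_zero M ((hfibrant X).1 hX).1.2 ((hfibrant Y).1 hY).1.2 hf0
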